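/- Let L ≥ 1, let α be an L×L complex matrix with ‖α‖ < 1, and let U₁, V₁, U₂, V₂ ∈ U(L). Then for every z ∈ ℂ \ {0} the transfer matrix T(z) is invertible and T(z)⁻¹ = 𝓛 · T(1/z̄)* · 𝓛, where z̄ denotes complex conjugation. -/

import Mathlib

open Matrix
open scoped Matrix.Norms.L2Operator ComplexOrder

/-- The block matrix `T₀(z) = [[z⁻¹ ρ̃⁻¹, ρ̃⁻¹ α*], [α ρ̃⁻¹, z ρ⁻¹]]`, where `ρ` (resp. `ρt`)
stands for the positive semidefinite square root of `1 - α αᴴ` (resp. `1 - αᴴ α`), passed as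
arguments. -/
noncomputable def T0mat (L : ℕ) (α ρ ρt : Matrix (Fin L) (Fin L) ℂ) (z : ℂ) :
    Matrix (Fin L ⊕ Fin L) (Fin L ⊕ Fin L) ℂ :=
  fromBlocks (z⁻¹ • ρt⁻¹) (ρt⁻¹ * αᴴ) (α * ρt⁻¹) (z • ρ⁻¹)

/-- The transfer matrix `T(z) = diag(V₂, U₂ᴴ) · T₀(z) · diag(V₁, U₁ᴴ) · T₀(1)`. -/
noncomputable def transferMat (L : ℕ) (α ρ ρt U₁ V₁ U₂ V₂ : Matrix (Fin L) (Fin L) ℂ) (z : ℂ) :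
    Matrix (Fin L ⊕ Fin L) (Fin L ⊕ Fin L) ℂ :=
  fromBlocks V₂ 0 0 U₂ᴴ * T0mat L α ρ ρt z * fromBlocks V₁ 0 0 U₁ᴴ * T0mat L α ρ ρt 1

/-!
The transfer matrix is `𝓛`-unitary in the sense that `T(z) 𝓛 T(1/z̄)ᴴ = 𝓛`; since `𝓛² = 1`
this exhibits `𝓛 T(1/z̄)ᴴ 𝓛` as a right inverse of `T(z)`. The relation is stable under products,
holds for the block-diagonal unitary factors, and for `T₀` it reduces, block by block, to
`ρ̃⁻¹ (1 - α*α) ρ̃⁻¹ = 1`, its analogue for `ρ`, and the intertwining relation `ρ α = α ρ̃`.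
The latter holds because `Y = ρ α - α ρ̃` solves the Sylvester equation `ρ Y + Y ρ̃ = 0`, whose
only solution is `0` when `ρ` is positive definite and `ρ̃` positive semidefinite:
`tr (Yᴴ ρ Y) + tr (Y ρ̃ Yᴴ) = 0` is a sum of nonnegative traces. Invertibility of `ρ` and `ρ̃`
comes from `‖α‖ < 1`.
-/

theorem mul_mul_star_mul_eq {M : Type*} [Monoid M] [StarMul M] {J A A' B B' : M}
    (hA : A * J * star A' = J) (hB : B * J * star B' = J) :
    A * B * J * star (A' * B') = J :=
  calc A * B * J * star (A' * B') = A * (B * J * star B') * star A' := by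
        simp only [star_mul, mul_assoc]
    _ = J := by rw [hB, hA]

namespace Matrix

variable {n m 𝕜 : Type*} [Fintype n] [Fintype m] [DecidableEq n]

def signMatrix (n R : Type*) [DecidableEq n] [Ring R] : Matrix (n ⊕ n) (n ⊕ n) R :=
  fromBlocks 1 0 0 (-1)

theorem signMatrix_mul_self (R : Type*) [Ring R] : signMatrix n R * signMatrix n R = 1 := by
  simp [signMatrix, fromBlocks_multiply, fromBlocks_one]

theorem fromBlocks_mul_signMatrix_mul_conjTranspose {R : Type*} [CommRing R] [StarRing R]
    {V W : Matrix n n R} (hV : V ∈ unitaryGroup n R) (hW : W ∈ unitaryGroup n R) :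
    fromBlocks V 0 0 W * signMatrix n R * (fromBlocks V 0 0 W)ᴴ = signMatrix n R := by
  have hV' : V * Vᴴ = 1 := mem_unitaryGroup_iff.mp hV
  have hW' : W * Wᴴ = 1 := mem_unitaryGroup_iff.mp hW
  simp [signMatrix, fromBlocks_conjTranspose, fromBlocks_multiply, hV', hW']

theorem inv_mul_eq_mul_inv_of_mul_eq_mul {R : Type*} [CommRing R] {A B X : Matrix n n R}
    (hA : IsUnit A) (hB : IsUnit B) (h : A * X = X * B) : A⁻¹ * X = X * B⁻¹ := by
  rw [isUnit_iff_isUnit_det] at hA hB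
  calc A⁻¹ * X = A⁻¹ * (X * B) * B⁻¹ := by
        rw [Matrix.mul_assoc, Matrix.mul_assoc, mul_nonsing_inv _ hB, Matrix.mul_one]
    _ = X * B⁻¹ := by rw [← h, nonsing_inv_mul_cancel_left _ _ hA]

theorem inv_mul_mul_inv_of_mul_self_eq_one_sub {R : Type*} [CommRing R] {A X : Matrix n n R}
    (hA : IsUnit A) (h : A * A = 1 - X) : A⁻¹ * X * A⁻¹ = A⁻¹ * A⁻¹ - 1 := by
  rw [isUnit_iff_isUnit_det] at hA
  obtain rfl : X = 1 - A * A := by rw [h]; abel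
  rw [Matrix.mul_sub, Matrix.sub_mul, Matrix.mul_one, ← Matrix.mul_assoc A⁻¹ A A,
    nonsing_inv_mul _ hA, Matrix.one_mul, mul_nonsing_inv _ hA]

variable [RCLike 𝕜]

open scoped MatrixOrder in
theorem eq_zero_of_mul_add_mul_eq_zero {A : Matrix n n 𝕜} {B : Matrix m m 𝕜}
    {Y : Matrix n m 𝕜} (hA : A.PosSemidef) (hAu : IsUnit A) (hB : B.PosSemidef)
    (h : A * Y + Y * B = 0) : Y = 0 := by
  obtain ⟨S, rfl⟩ := CStarAlgebra.nonneg_iff_eq_star_mul_self.mp hA.nonneg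
  have htrace : ((S * Y)ᴴ * (S * Y)).trace + (Y * B * Yᴴ).trace = 0 := by
    rw [trace_mul_comm (Y * B), ← trace_add, conjTranspose_mul, ← star_eq_conjTranspose S,
      Matrix.mul_assoc, ← Matrix.mul_assoc (star S), ← Matrix.mul_add, h, Matrix.mul_zero,
      trace_zero]
  have hSY : S * Y = 0 := trace_conjTranspose_mul_self_eq_zero_iff.mp
    ((add_eq_zero_iff_of_nonneg (posSemidef_conjTranspose_mul_self _).trace_nonneg
      (hB.mul_mul_conjTranspose_same Y).trace_nonneg).mp htrace).1
  rw [← nonsing_inv_mul_cancel_left _ Y ((isUnit_iff_isUnit_det _).mp hAu), Matrix.mul_assoc,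
    hSY, Matrix.mul_zero, Matrix.mul_zero]

theorem mul_eq_mul_of_mul_self_eq_one_sub [DecidableEq m] {α : Matrix n m 𝕜}
    {ρ : Matrix n n 𝕜} {ρt : Matrix m m 𝕜} (hρ : ρ.PosSemidef) (hρu : IsUnit ρ)
    (hρt : ρt.PosSemidef) (hρ2 : ρ * ρ = 1 - α * αᴴ) (hρt2 : ρt * ρt = 1 - αᴴ * α) :
    ρ * α = α * ρt := by
  refine sub_eq_zero.mp (eq_zero_of_mul_add_mul_eq_zero hρ hρu hρt ?_)
  calc ρ * (ρ * α - α * ρt) + (ρ * α - α * ρt) * ρt = ρ * ρ * α - α * (ρt * ρt) := by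
        simp only [Matrix.mul_sub, Matrix.sub_mul, Matrix.mul_assoc]; abel
    _ = 0 := by
        rw [hρ2, hρt2]
        simp only [Matrix.mul_sub, Matrix.sub_mul, Matrix.mul_one, Matrix.one_mul,
          Matrix.mul_assoc]
        abel

theorem isUnit_one_sub_conjTranspose_mul_self {α : Matrix m n 𝕜} (hα : ‖α‖ < 1) :
    IsUnit (1 - αᴴ * α) := by
  refine isUnit_one_sub_of_norm_lt_one ?_
  rw [l2_opNorm_conjTranspose_mul_self]
  nlinarith [norm_nonneg α]

theorem isUnit_one_sub_mul_conjTranspose_self [DecidableEq m] {α : Matrix n m 𝕜} (hα : ‖α‖ < 1) :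
    IsUnit (1 - α * αᴴ) := by
  simpa using isUnit_one_sub_conjTranspose_mul_self (α := αᴴ) (by rwa [l2_opNorm_conjTranspose])

end Matrix

theorem T0mat_mul_signMatrix_mul_conjTranspose {L : ℕ} {α ρ ρt : Matrix (Fin L) (Fin L) ℂ}
    (hρ : ρ.IsHermitian) (hρt : ρt.IsHermitian) (hρu : IsUnit ρ) (hρtu : IsUnit ρt)
    (hρ2 : ρ * ρ = 1 - α * αᴴ) (hρt2 : ρt * ρt = 1 - αᴴ * α) (hcomm : ρ * α = α * ρt)
    {z w : ℂ} (hzw : z * star w = 1) :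
    T0mat L α ρ ρt z * signMatrix (Fin L) ℂ * (T0mat L α ρ ρt w)ᴴ = signMatrix (Fin L) ℂ := by
  have hz : z ≠ 0 := left_ne_zero_of_mul_eq_one hzw
  have hw : star w = z⁻¹ := eq_inv_of_mul_eq_one_right hzw
  have hαQ : α * ρt⁻¹ = ρ⁻¹ * α := (Matrix.inv_mul_eq_mul_inv_of_mul_eq_mul hρu hρtu hcomm).symm
  have hQαH : ρt⁻¹ * αᴴ = αᴴ * ρ⁻¹ := by
    simpa [hρ.inv.eq, hρt.inv.eq] using congrArg conjTranspose hαQ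
  have hQ := Matrix.inv_mul_mul_inv_of_mul_self_eq_one_sub hρtu hρt2
  have hP := Matrix.inv_mul_mul_inv_of_mul_self_eq_one_sub hρu hρ2
  have hT : (T0mat L α ρ ρt w)ᴴ = fromBlocks (z • ρt⁻¹) (ρt⁻¹ * αᴴ) (α * ρt⁻¹) (z⁻¹ • ρ⁻¹) := by
    simp [T0mat, fromBlocks_conjTranspose, hρ.inv.eq, hρt.inv.eq, hw]
  rw [hT, T0mat, signMatrix, fromBlocks_multiply, fromBlocks_multiply]
  congr 1 <;>
    simp only [Matrix.mul_one, Matrix.mul_zero, add_zero, zero_add, Matrix.mul_neg, Matrix.neg_mul]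
  · rw [smul_mul_smul_comm, inv_mul_cancel₀ hz, one_smul, ← Matrix.mul_assoc (ρt⁻¹ * αᴴ),
      Matrix.mul_assoc ρt⁻¹ αᴴ α, hQ]
    abel
  · simp [Matrix.mul_assoc, ← hQαH]
  · simp [hαQ, Matrix.mul_assoc]
  · rw [smul_mul_smul_comm, mul_inv_cancel₀ hz, one_smul, hαQ, hQαH,
      ← Matrix.mul_assoc (ρ⁻¹ * α), Matrix.mul_assoc ρ⁻¹ α αᴴ, hP]
    abel

theorem transferMat_mul_signMatrix_mul_conjTranspose {L : ℕ}
    {α ρ ρt U₁ V₁ U₂ V₂ : Matrix (Fin L) (Fin L) ℂ}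
    (hρ : ρ.IsHermitian) (hρt : ρt.IsHermitian) (hρu : IsUnit ρ) (hρtu : IsUnit ρt)
    (hρ2 : ρ * ρ = 1 - α * αᴴ) (hρt2 : ρt * ρt = 1 - αᴴ * α) (hcomm : ρ * α = α * ρt)
    (hU₁ : U₁ ∈ unitaryGroup (Fin L) ℂ) (hV₁ : V₁ ∈ unitaryGroup (Fin L) ℂ)
    (hU₂ : U₂ ∈ unitaryGroup (Fin L) ℂ) (hV₂ : V₂ ∈ unitaryGroup (Fin L) ℂ)
    {z w : ℂ} (hzw : z * star w = 1) :
    transferMat L α ρ ρt U₁ V₁ U₂ V₂ z * signMatrix (Fin L) ℂ *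
      (transferMat L α ρ ρt U₁ V₁ U₂ V₂ w)ᴴ = signMatrix (Fin L) ℂ := by
  have hT0 {z w : ℂ} (hzw : z * star w = 1) :=
    T0mat_mul_signMatrix_mul_conjTranspose hρ hρt hρu hρtu hρ2 hρt2 hcomm hzw
  have hD₁ := fromBlocks_mul_signMatrix_mul_conjTranspose hV₁ (Unitary.star_mem hU₁)
  have hD₂ := fromBlocks_mul_signMatrix_mul_conjTranspose hV₂ (Unitary.star_mem hU₂)
  exact mul_mul_star_mul_eq (mul_mul_star_mul_eq (mul_mul_star_mul_eq hD₂ (hT0 hzw)) hD₁)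
    (hT0 (by simp))

theorem stmt_7_general (L : ℕ) (α ρ ρt U₁ V₁ U₂ V₂ : Matrix (Fin L) (Fin L) ℂ)
    (hα : ‖α‖ < 1)
    (hρ : ρ.PosSemidef) (hρ2 : ρ * ρ = 1 - α * αᴴ)
    (hρt : ρt.PosSemidef) (hρt2 : ρt * ρt = 1 - αᴴ * α)
    (hU₁ : U₁ ∈ Matrix.unitaryGroup (Fin L) ℂ) (hV₁ : V₁ ∈ Matrix.unitaryGroup (Fin L) ℂ)
    (hU₂ : U₂ ∈ Matrix.unitaryGroup (Fin L) ℂ) (hV₂ : V₂ ∈ Matrix.unitaryGroup (Fin L) ℂ) :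
    ∀ z : ℂ, z ≠ 0 →
      IsUnit (transferMat L α ρ ρt U₁ V₁ U₂ V₂ z) ∧
      (transferMat L α ρ ρt U₁ V₁ U₂ V₂ z)⁻¹ =
        fromBlocks (1 : Matrix (Fin L) (Fin L) ℂ) 0 0 (-1) *
          (transferMat L α ρ ρt U₁ V₁ U₂ V₂ (1 / (starRingEnd ℂ z)))ᴴ *
          fromBlocks (1 : Matrix (Fin L) (Fin L) ℂ) 0 0 (-1) := by
  intro z hz
  have hρu : IsUnit ρ := isUnit_of_mul_isUnit_right (x := ρ) (y := ρ)
    (hρ2 ▸ isUnit_one_sub_mul_conjTranspose_self hα)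
  have hρtu : IsUnit ρt := isUnit_of_mul_isUnit_right (x := ρt) (y := ρt)
    (hρt2 ▸ isUnit_one_sub_conjTranspose_mul_self hα)
  have hcomm : ρ * α = α * ρt := mul_eq_mul_of_mul_self_eq_one_sub hρ hρu hρt hρ2 hρt2
  have hT := transferMat_mul_signMatrix_mul_conjTranspose hρ.1 hρt.1 hρu hρtu hρ2 hρt2 hcomm
    hU₁ hV₁ hU₂ hV₂ (z := z) (w := 1 / starRingEnd ℂ z) (by simp [hz])
  have hinv : transferMat L α ρ ρt U₁ V₁ U₂ V₂ z * (signMatrix (Fin L) ℂ *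
      (transferMat L α ρ ρt U₁ V₁ U₂ V₂ (1 / starRingEnd ℂ z))ᴴ * signMatrix (Fin L) ℂ) = 1 := by
    rw [← Matrix.mul_assoc, ← Matrix.mul_assoc, hT, signMatrix_mul_self]
  exact ⟨.of_mul_eq_one _ hinv, inv_eq_right_inv hinv⟩

/-- Let `L ≥ 1`, `α` an `L×L` complex matrix with `‖α‖ < 1` (operator norm
induced by the Euclidean norm), and `U₁, V₁, U₂, V₂ ∈ U(L)`. Then for every `z ∈ ℂ \ {0}` the
transfer matrix `T(z)` is invertible and `T(z)⁻¹ = 𝓛 · T(1/z̄)ᴴ · 𝓛` with `𝓛 = diag(I, -I)`. -/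
theorem stmt_7 (L : ℕ) (hL : 1 ≤ L) (α ρ ρt U₁ V₁ U₂ V₂ : Matrix (Fin L) (Fin L) ℂ)
    (hα : ‖α‖ < 1)
    (hρ : ρ.PosSemidef) (hρ2 : ρ * ρ = 1 - α * αᴴ)
    (hρt : ρt.PosSemidef) (hρt2 : ρt * ρt = 1 - αᴴ * α)
    (hU₁ : U₁ ∈ Matrix.unitaryGroup (Fin L) ℂ) (hV₁ : V₁ ∈ Matrix.unitaryGroup (Fin L) ℂ)
    (hU₂ : U₂ ∈ Matrix.unitaryGroup (Fin L) ℂ) (hV₂ : V₂ ∈ Matrix.unitaryGroup (Fin L) ℂ) :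
    ∀ z : ℂ, z ≠ 0 →
      IsUnit (transferMat L α ρ ρt U₁ V₁ U₂ V₂ z) ∧
      (transferMat L α ρ ρt U₁ V₁ U₂ V₂ z)⁻¹ =
        fromBlocks (1 : Matrix (Fin L) (Fin L) ℂ) 0 0 (-1) *
          (transferMat L α ρ ρt U₁ V₁ U₂ V₂ (1 / (starRingEnd ℂ z)))ᴴ *
          fromBlocks (1 : Matrix (Fin L) (Fin L) ℂ) 0 0 (-1) :=
  stmt_7_general L α ρ ρt U₁ V₁ U₂ V₂ hα hρ hρ2 hρt hρt2 hU₁ hV₁ hU₂ hV₂
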